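/- Define $\xi_{(0)}(z) = 2\sqrt{3}\,\arctan\!\Big(\frac{\sqrt{3}}{3+2z}\Big) + \log\!\Big(\frac{z^2}{z^2+3z+3}\Big)$ for $z > 0$. Then for all $z > 0$, $z\,(z^2+3z+3)\,\xi_{(0)}'(z) = 6$; in particular $\big(z(z^2+3z+3)\,\xi_{(0)}'(z)\big)' = 0$, so $\xi_{(0)}$ is a zero mode of the Sturm-Liouville operator $\mathcal{L}\xi = -(z(z^2+3z+3)\,\xi')'$. -/

import Mathlib

open Set Real

/-- The non-constant zero mode of the Sturm-Liouville problem for D3-branes on a resolved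
conifold over `S⁵/ℤ₃`. -/
noncomputable def xiZero (z : ℝ) : ℝ :=
  2 * Real.sqrt 3 * Real.arctan (Real.sqrt 3 / (3 + 2*z)) +
    Real.log (z^2 / (z^2 + 3*z + 3))

lemma xiZero_hasDerivAt {z : ℝ} (hz : 0 < z) :
    HasDerivAt xiZero (6 / (z * (z^2 + 3*z + 3))) z := by
  have hq : (0:ℝ) < z^2 + 3*z + 3 := by nlinarith
  have hq' : z^2 + 3*z + 3 ≠ 0 := ne_of_gt hq
  have hz' : z ≠ 0 := ne_of_gt hz
  have hd : (3:ℝ) + 2*z ≠ 0 := by positivity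
  have h1 : HasDerivAt (fun t : ℝ => 3 + 2*t) 2 z := by
    simpa using ((hasDerivAt_id z).const_mul (2:ℝ)).const_add 3
  have hu : HasDerivAt (fun t : ℝ => Real.sqrt 3 / (3 + 2*t))
      ((0 * (3 + 2*z) - Real.sqrt 3 * 2) / (3 + 2*z)^2) z :=
    (hasDerivAt_const z (Real.sqrt 3)).div h1 hd
  have harc := (hu.arctan).const_mul (2 * Real.sqrt 3)
  have hnum : HasDerivAt (fun t : ℝ => t^2) (2*z) z := by
    simpa using hasDerivAt_pow 2 z
  have hden : HasDerivAt (fun t : ℝ => t^2 + 3*t + 3) (2*z + 3) z := by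
    have := (hasDerivAt_pow 2 z).add (((hasDerivAt_id z).const_mul (3:ℝ)).add_const 3)
    simpa [add_assoc, Pi.add_def] using this
  have hf : HasDerivAt (fun t : ℝ => t^2 / (t^2 + 3*t + 3))
      ((2*z * (z^2 + 3*z + 3) - z^2 * (2*z + 3)) / (z^2 + 3*z + 3)^2) z :=
    hnum.div hden hq'
  have hfz : z^2 / (z^2 + 3*z + 3) ≠ 0 := by positivity
  have hlog := hf.log hfz
  have h : HasDerivAt (fun y => 2 * Real.sqrt 3 * Real.arctan (Real.sqrt 3 / (3 + 2 * y)) +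
      Real.log (y ^ 2 / (y ^ 2 + 3 * y + 3))) _ z := harc.add hlog
  have hs3 : Real.sqrt 3 ^ 2 = 3 := Real.sq_sqrt (by norm_num)
  convert h using 1
  · rfl
  have h2 : (1:ℝ) + (Real.sqrt 3 / (3 + 2*z))^2 ≠ 0 := by positivity
  field_simp
  ring_nf
  simp only [hs3]
  ring

theorem xiZero_quasi_derivative :
    ∀ z > (0:ℝ),
      z * (z^2 + 3*z + 3) * deriv xiZero z = 6 ∧
      deriv (fun t => t * (t^2 + 3*t + 3) * deriv xiZero t) z = 0 := by
  have key : ∀ z > (0:ℝ), z * (z^2 + 3*z + 3) * deriv xiZero z = 6 := by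
    intro z hz
    rw [(xiZero_hasDerivAt hz).deriv]
    have hq : (0:ℝ) < z^2 + 3*z + 3 := by nlinarith
    field_simp
  intro z hz
  refine ⟨key z hz, ?_⟩
  have hev : (fun t => t * (t^2 + 3*t + 3) * deriv xiZero t) =ᶠ[nhds z] fun _ => (6:ℝ) := by
    filter_upwards [isOpen_Ioi.mem_nhds hz] with t ht
    exact key t ht
  rw [hev.deriv_eq, deriv_const]
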